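/- Let (X,δ) be a nonempty metric space carrying a uniformly bounded Borel measure μ. Then for any x ∈ X, d∞(X) = limsup_{R→∞} (log μ(B(x,R)))/(log R). -/

import Mathlib

open Metric Filter Topology Set

/-- Logarithm of an extended natural number, valued in `EReal` (`⊤` for `⊤`). -/
noncomputable def elog (n : ℕ∞) : EReal :=
  if n = ⊤ then ⊤ else ((Real.log (n.toNat : ℝ) : ℝ) : EReal)

/-- `coverNum r Ω` : the least number of open balls of radius `r` needed to cover `Ω`,
valued in `ℕ∞` (it is `⊤` if no finite cover exists). -/
noncomputable def coverNum {X : Type*} [MetricSpace X] (r : ℝ) (Ω : Set X) : ℕ∞ :=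
  sInf ((fun s : Finset X => (s.card : ℕ∞)) ''
    {s : Finset X | Ω ⊆ ⋃ x ∈ s, Metric.ball x r})

/-- The asymptotic dimension with base point `x`:
`d∞(X) = lim_{r→∞} limsup_{R→∞} log n_r(B(x,R)) / log R`; the limit in `r` exists since the
inner expression is nonincreasing in `r`, hence equals the infimum over `r > 0`. -/
noncomputable def asympDim {X : Type*} [MetricSpace X] (x : X) : EReal :=
  ⨅ (r : ℝ) (_ : 0 < r),
    Filter.limsup (fun R : ℝ => ((Real.log R)⁻¹ : EReal) * elog (coverNum r (Metric.ball x R)))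
      Filter.atTop

/-- The asymptotic dimension of a metric space (independent of the base point). -/
noncomputable def asympDimSpace (X : Type*) [MetricSpace X] : EReal :=
  ⨆ x : X, asympDim x

/-- A uniformly bounded Borel measure: for every `r > 0` the volumes of balls of radius `r`
are bounded away from `0` and from `∞`, uniformly in the centre. -/
def UnifBounded {X : Type*} [MetricSpace X] [MeasurableSpace X]
    (μ : MeasureTheory.Measure X) : Prop :=
  ∀ r : ℝ, 0 < r →
    (0 < ⨅ x : X, μ (Metric.ball x r)) ∧ (⨆ x : X, μ (Metric.ball x r)) < ⊤

/-- Logarithm of an extended nonnegative real, valued in `EReal` (`⊤` for `⊤`). -/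
noncomputable def elogENN (t : ENNReal) : EReal :=
  if t = ⊤ then ⊤ else ((Real.log t.toReal : ℝ) : EReal)

/-!
If `B(x,R)` is covered by `n_r` balls of radius `r`, then `μ(B(x,R)) ≤ n_r · sup_y μ(B(y,r))`.
Conversely, a maximal `1`-separated subset of `B(x,R)` is a cover by balls of radius `2`, and the
balls of radius `1/2` around its points are disjoint and lie in `B(x,2R)`, so
`n_2 · inf_y μ(B(y,1/2)) ≤ μ(B(x,2R))`. After taking logarithms and dividing by `log R` the
constants disappear, and so does the doubling of the radius since `log 2R / log R → 1`.
-/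

open MeasureTheory
open scoped ENNReal NNReal

section Covering

variable {X : Type*} [MetricSpace X] {r : ℝ} {Ω : Set X}

lemma coverNum_le_card {s : Finset X} (h : Ω ⊆ ⋃ y ∈ s, ball y r) : coverNum r Ω ≤ s.card :=
  sInf_le ⟨s, h, rfl⟩

lemma exists_finset_card_eq_coverNum (h : coverNum r Ω ≠ ⊤) :
    ∃ s : Finset X, Ω ⊆ ⋃ y ∈ s, ball y r ∧ (s.card : ℕ∞) = coverNum r Ω := by
  have hne : ((fun s : Finset X => (s.card : ℕ∞)) ''
      {s : Finset X | Ω ⊆ ⋃ y ∈ s, ball y r}).Nonempty := by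
    by_contra hempty
    rw [Set.not_nonempty_iff_eq_empty] at hempty
    exact h (by rw [coverNum, hempty, sInf_empty])
  obtain ⟨s, hs, hcard⟩ := csInf_mem hne
  exact ⟨s, hs, hcard⟩

lemma coverNum_ne_zero (h : Ω.Nonempty) : coverNum r Ω ≠ 0 := by
  intro h0
  obtain ⟨s, hs, hcard⟩ := exists_finset_card_eq_coverNum (r := r) (h0 ▸ ENat.zero_ne_top)
  rw [h0, Nat.cast_eq_zero, Finset.card_eq_zero] at hcard
  subst hcard
  simp only [Finset.notMem_empty, Set.iUnion_of_empty, Set.iUnion_empty,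
    Set.subset_empty_iff] at hs
  exact h.ne_empty hs

lemma coverNum_le_externalCoveringNumber {ε : ℝ≥0} (hε : ε < r) :
    coverNum r Ω ≤ externalCoveringNumber ε Ω := by
  refine le_iInf₂ fun C hC => ?_
  rcases C.finite_or_infinite with hfin | hinf
  · rw [hfin.encard_eq_coe_toFinset_card]
    refine coverNum_le_card (hC.subset_iUnion_closedBall.trans fun z hz => ?_)
    obtain ⟨y, hy, hzy⟩ := Set.mem_iUnion₂.1 hz
    exact Set.mem_biUnion (hfin.mem_toFinset.2 hy) (closedBall_subset_ball hε hzy)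
  · simp [hinf.encard_eq]

end Covering

section Measure

variable {X : Type*} [MetricSpace X] [MeasurableSpace X] (μ : Measure X)

lemma measure_le_coverNum_mul_iSup {r : ℝ} (Ω : Set X) (h : ⨆ y, μ (ball y r) ≠ 0) :
    μ Ω ≤ coverNum r Ω * ⨆ y, μ (ball y r) := by
  by_cases hN : coverNum r Ω = ⊤
  · simp [hN, ENNReal.top_mul h]
  obtain ⟨s, hs, hcard⟩ := exists_finset_card_eq_coverNum hN
  calc μ Ω ≤ μ (⋃ y ∈ s, ball y r) := measure_mono hs
    _ ≤ ∑ y ∈ s, μ (ball y r) := measure_biUnion_finset_le s _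
    _ ≤ ∑ _y ∈ s, ⨆ z, μ (ball z r) := Finset.sum_le_sum fun y _ => le_iSup (μ <| ball · r) y
    _ = coverNum r Ω * ⨆ y, μ (ball y r) := by
      rw [Finset.sum_const, nsmul_eq_mul, ← hcard, ENat.toENNReal_coe]

variable [OpensMeasurableSpace X] {ε : ℝ≥0}

lemma Metric.IsSeparated.encard_mul_iInf_le_measure {C U : Set X} (hC : IsSeparated ε C)
    (hU : ∀ y ∈ C, ball y (ε / 2) ⊆ U) : C.encard * ⨅ y, μ (ball y (ε / 2)) ≤ μ U := by
  have hdisj : Pairwise fun y z : C => Disjoint (ball (y : X) (ε / 2)) (ball z (ε / 2)) := by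
    intro y z hyz
    refine ball_disjoint_ball ?_
    have : (ε : ℝ≥0∞) < edist (y : X) z := hC y.2 z.2 (Subtype.coe_ne_coe.2 hyz)
    rw [edist_dist, ENNReal.coe_lt_ofReal] at this
    linarith
  calc C.encard * ⨅ y, μ (ball y (ε / 2)) = ∑' _y : C, ⨅ y, μ (ball y (ε / 2)) :=
        (ENNReal.tsum_set_const C _).symm
    _ ≤ ∑' y : C, μ (ball (y : X) (ε / 2)) := ENNReal.tsum_le_tsum fun y => iInf_le _ _
    _ ≤ μ (⋃ y : C, ball (y : X) (ε / 2)) :=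
        tsum_meas_le_meas_iUnion_of_disjoint μ (fun _ => measurableSet_ball) hdisj
    _ ≤ μ U := measure_mono (Set.iUnion_subset fun y => hU y y.2)

lemma packingNumber_mul_iInf_le_measure {Ω U : Set X} (hU : ∀ y ∈ Ω, ball y (ε / 2) ⊆ U) :
    packingNumber ε Ω * ⨅ y, μ (ball y (ε / 2)) ≤ μ U := by
  simp only [packingNumber, ENat.toENNReal_iSup, ENNReal.iSup_mul, iSup_le_iff]
  exact fun C hCΩ hC => hC.encard_mul_iInf_le_measure μ fun y hy => hU y (hCΩ hy)

lemma coverNum_mul_iInf_le_measure {r : ℝ} (hε : ε < r) {Ω U : Set X}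
    (hU : ∀ y ∈ Ω, ball y (ε / 2) ⊆ U) :
    coverNum r Ω * ⨅ y, μ (ball y (ε / 2)) ≤ μ U := by
  have hN : coverNum r Ω ≤ packingNumber ε Ω :=
    (coverNum_le_externalCoveringNumber hε).trans <|
      (externalCoveringNumber_le_coveringNumber ε Ω).trans (coveringNumber_le_packingNumber ε Ω)
  calc coverNum r Ω * ⨅ y, μ (ball y (ε / 2))
      ≤ packingNumber ε Ω * ⨅ y, μ (ball y (ε / 2)) := by gcongr
    _ ≤ μ U := packingNumber_mul_iInf_le_measure μ hU

end Measure

section Logarithm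

lemma elogENN_coe_enat (n : ℕ∞) : elogENN n = elog n := by
  cases n with
  | top => simp [elogENN, elog]
  | coe m => simp [elogENN, elog]

lemma elogENN_mul {s c : ℝ≥0∞} (hs : s ≠ 0) (hc₀ : c ≠ 0) (hc : c ≠ ⊤) :
    elogENN (s * c) = elogENN s + (Real.log c.toReal : EReal) := by
  by_cases hs_top : s = ⊤
  · simp [elogENN, hs_top, ENNReal.top_mul hc₀]
  rw [elogENN, elogENN, if_neg (ENNReal.mul_ne_top hs_top hc), if_neg hs_top,
    ENNReal.toReal_mul, Real.log_mul (ENNReal.toReal_ne_zero.2 ⟨hs, hs_top⟩)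
      (ENNReal.toReal_ne_zero.2 ⟨hc₀, hc⟩), EReal.coe_add]

lemma elogENN_mono {s t : ℝ≥0∞} (hs : s ≠ 0) (h : s ≤ t) : elogENN s ≤ elogENN t := by
  by_cases ht : t = ⊤
  · simp [elogENN, ht]
  have hs_top : s ≠ ⊤ := ne_top_of_le_ne_top ht h
  rw [elogENN, elogENN, if_neg ht, if_neg hs_top, EReal.coe_le_coe_iff]
  exact Real.log_le_log (ENNReal.toReal_pos hs hs_top) (ENNReal.toReal_mono ht h)

end Logarithm

section GrowthExponent

lemma limsup_inv_log_mul_le_of_eventually_le {u : ℝ → EReal} {b C : ℝ}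
    (h : ∀ᶠ R in atTop, u R ≤ ((b * Real.log R + C : ℝ) : EReal)) :
    limsup (fun R => ((Real.log R)⁻¹ : EReal) * u R) atTop ≤ b := by
  have hlim : Tendsto (fun R => b + C * (Real.log R)⁻¹) atTop (𝓝 b) := by
    simpa using tendsto_const_nhds.add (Real.tendsto_log_atTop.inv_tendsto_atTop.const_mul C)
  have hbound : ∀ᶠ R in atTop,
      ((Real.log R)⁻¹ : EReal) * u R ≤ ((b + C * (Real.log R)⁻¹ : ℝ) : EReal) := by
    filter_upwards [h, eventually_gt_atTop 1] with R hu hR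
    have hlog := Real.log_pos hR
    rw [← EReal.div_eq_inv_mul, EReal.div_le_iff_le_mul (by exact_mod_cast hlog)
      (EReal.coe_ne_top _), ← EReal.coe_mul]
    convert hu using 2
    field_simp
  calc limsup (fun R => ((Real.log R)⁻¹ : EReal) * u R) atTop
      ≤ limsup (fun R => ((b + C * (Real.log R)⁻¹ : ℝ) : EReal)) atTop := limsup_le_limsup hbound
    _ = b := ((continuous_coe_real_ereal.tendsto _).comp hlim).limsup_eq

lemma eventually_lt_mul_log_of_limsup_lt {v : ℝ → EReal} {b : ℝ}
    (h : limsup (fun R => ((Real.log R)⁻¹ : EReal) * v R) atTop < b) :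
    ∀ᶠ R in atTop, v R < ((b * Real.log R : ℝ) : EReal) := by
  filter_upwards [eventually_lt_of_limsup_lt h, eventually_gt_atTop 1] with R hv hR
  rwa [← EReal.div_eq_inv_mul, EReal.div_lt_iff (by exact_mod_cast Real.log_pos hR)
    (EReal.coe_ne_top _), ← EReal.coe_mul] at hv

lemma limsup_inv_log_mul_le_limsup {u v : ℝ → EReal} {a C : ℝ} (ha : 0 < a)
    (h : ∀ᶠ R in atTop, u R ≤ v (a * R) + C) :
    limsup (fun R => ((Real.log R)⁻¹ : EReal) * u R) atTop ≤
      limsup (fun R => ((Real.log R)⁻¹ : EReal) * v R) atTop := by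
  refine EReal.le_of_forall_lt_iff_le.1 fun b hb => ?_
  have hv := (tendsto_id.const_mul_atTop ha).eventually (eventually_lt_mul_log_of_limsup_lt hb)
  refine limsup_inv_log_mul_le_of_eventually_le (C := b * Real.log a + C) ?_
  filter_upwards [h, hv, eventually_gt_atTop 0] with R hu hvR hR
  calc u R ≤ v (a * R) + C := hu
    _ ≤ ((b * Real.log (a * R) : ℝ) : EReal) + C := by gcongr; exact hvR.le
    _ = ((b * Real.log R + (b * Real.log a + C) : ℝ) : EReal) := by
      rw [← EReal.coe_add, Real.log_mul ha.ne' hR.ne']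
      ring_nf

end GrowthExponent

namespace UnifBounded

variable {X : Type*} [MetricSpace X] [MeasurableSpace X] {μ : Measure X}

lemma measure_ball_ne_zero (hμ : UnifBounded μ) (x : X) {r : ℝ} (hr : 0 < r) :
    μ (ball x r) ≠ 0 :=
  ((hμ r hr).1.trans_le (iInf_le _ x)).ne'

lemma iSup_measure_ball_ne_zero (hμ : UnifBounded μ) (x : X) {r : ℝ} (hr : 0 < r) :
    ⨆ y, μ (ball y r) ≠ 0 :=
  ne_bot_of_le_ne_bot (hμ.measure_ball_ne_zero x hr) (le_iSup (μ <| ball · r) x)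

lemma iInf_measure_ball_ne_top (hμ : UnifBounded μ) (x : X) {r : ℝ} (hr : 0 < r) :
    ⨅ y, μ (ball y r) ≠ ⊤ :=
  ((iInf_le _ x).trans_lt ((le_iSup (μ <| ball · r) x).trans_lt (hμ r hr).2)).ne

theorem limsup_log_measure_ball_le_asympDim (hμ : UnifBounded μ) (x : X) :
    limsup (fun R : ℝ => ((Real.log R)⁻¹ : EReal) * elogENN (μ (ball x R))) atTop ≤
      asympDim x := by
  refine le_iInf₂ fun r hr => limsup_inv_log_mul_le_limsup one_pos
    (C := Real.log (⨆ y, μ (ball y r)).toReal) ?_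
  filter_upwards [eventually_gt_atTop 0] with R hR
  have hS₀ := hμ.iSup_measure_ball_ne_zero x hr
  have hN : (coverNum r (ball x R) : ℝ≥0∞) ≠ 0 := by
    simpa using coverNum_ne_zero (nonempty_ball.2 hR)
  rw [one_mul, ← elogENN_coe_enat, ← elogENN_mul hN hS₀ (hμ r hr).2.ne]
  exact elogENN_mono (hμ.measure_ball_ne_zero x hR) (measure_le_coverNum_mul_iSup μ _ hS₀)

theorem asympDim_le_limsup_log_measure_ball [OpensMeasurableSpace X] (hμ : UnifBounded μ)
    (x : X) :
    asympDim x ≤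
      limsup (fun R : ℝ => ((Real.log R)⁻¹ : EReal) * elogENN (μ (ball x R))) atTop := by
  set c := ⨅ y, μ (ball y ((1 : ℝ≥0) / 2))
  have hc₀ : c ≠ 0 := (hμ _ (by norm_num)).1.ne'
  have hc : c ≠ ⊤ := hμ.iInf_measure_ball_ne_top x (by norm_num)
  refine (iInf₂_le 2 two_pos).trans
    (limsup_inv_log_mul_le_limsup two_pos (C := -Real.log c.toReal) ?_)
  filter_upwards [eventually_ge_atTop 1] with R hR
  have hN : (coverNum 2 (ball x R) : ℝ≥0∞) ≠ 0 := by
    simpa using coverNum_ne_zero (nonempty_ball.2 (by linarith))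
  have hpack : coverNum 2 (ball x R) * c ≤ μ (ball x (2 * R)) := by
    refine coverNum_mul_iInf_le_measure μ (by norm_num) fun y hy => ball_subset_ball' ?_
    rw [mem_ball] at hy
    push_cast
    linarith
  rw [EReal.coe_neg, ← sub_eq_add_neg, EReal.le_sub_iff_add_le (.inl (EReal.coe_ne_bot _))
    (.inl (EReal.coe_ne_top _)), ← elogENN_coe_enat, ← elogENN_mul hN hc₀ hc]
  exact elogENN_mono (mul_ne_zero hN hc₀) hpack

end UnifBounded

theorem stmt16_general {X : Type*} [MetricSpace X] [MeasurableSpace X] [BorelSpace X]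
    (μ : MeasureTheory.Measure X) (hμ : UnifBounded μ) (x : X) :
    asympDim x =
      Filter.limsup (fun R : ℝ => ((Real.log R)⁻¹ : EReal) * elogENN (μ (Metric.ball x R)))
        Filter.atTop :=
  le_antisymm (hμ.asympDim_le_limsup_log_measure_ball x) (hμ.limsup_log_measure_ball_le_asympDim x)

/-- Proposition 1.2.14: if `μ` is a uniformly bounded Borel measure on `X`, then
`d∞(X) = limsup_{R→∞} log μ(B(x,R)) / log R`. -/
theorem stmt16 {X : Type*} [MetricSpace X] [MeasurableSpace X] [BorelSpace X] [Nonempty X]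
    (μ : MeasureTheory.Measure X) (hμ : UnifBounded μ) (x : X) :
    asympDim x =
      Filter.limsup (fun R : ℝ => ((Real.log R)⁻¹ : EReal) * elogENN (μ (Metric.ball x R)))
        Filter.atTop :=
  stmt16_general μ hμ x
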